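/- arXiv:math/0409329 — 2 statements merged into one kernel-verified Lean document; each statement's English description precedes it below -/
import Mathlib

section
/- For all natural numbers k < d, the 2×2 Wronskian of P_{k;d} and (x+1)^d satisfies P_{k;d}(x)·d(x+1)^{d−1} − P′_{k;d}(x)·(x+1)^d = d·(d−1 choose k)·x^k·(x+1)^{d−1} in ℂ[x]. -/
open Polynomial

/-- The truncated binomial `P_{k;d}(x) = ∑_{i=0}^{k} (d choose i) x^i` as a complex
polynomial. -/
noncomputable def truncBinom (d k : ℕ) : Polynomial ℂ :=
  ∑ i ∈ Finset.range (k + 1), Polynomial.C (Nat.choose d i : ℂ) * Polynomial.X ^ i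

/-!
Writing `P = P_{k;d}`, the Wronskian equals `(d P - (x+1) P') (x+1)^{d-1}`, and
`d P - (x+1) P' = d (d-1 choose k) x^k` for all `k`, `d`: passing from `k` to `k+1` adds
`(d choose k+1) ((d - k - 1) x^{k+1} - (k+1) x^k)`, and the two coefficients are
`d (d-1 choose k+1)` and `d (d-1 choose k)` by the absorption identity and Pascal's rule.
-/

theorem Nat.succ_mul_choose_eq_mul_choose_pred (d k : ℕ) :
    (k + 1) * d.choose (k + 1) = d * (d - 1).choose k := by
  cases d with
  | zero => simp
  | succ n => rw [Nat.add_sub_cancel, Nat.add_one_mul_choose_eq, Nat.mul_comm]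

theorem Nat.mul_choose_succ_eq_mul_choose_pred (d k : ℕ) :
    d * d.choose (k + 1) = d * ((d - 1).choose k + (d - 1).choose (k + 1)) := by
  cases d with
  | zero => simp
  | succ n => rw [Nat.add_sub_cancel, Nat.choose_succ_succ']

theorem truncBinom_zero_right (d : ℕ) : truncBinom d 0 = 1 := by
  simp [truncBinom]

theorem truncBinom_succ (d k : ℕ) :
    truncBinom d (k + 1) = truncBinom d k + C (d.choose (k + 1) : ℂ) * X ^ (k + 1) :=
  Finset.sum_range_succ _ _

theorem C_mul_truncBinom_sub_X_add_one_mul_derivative (d k : ℕ) :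
    C (d : ℂ) * truncBinom d k - (X + 1) * derivative (truncBinom d k)
      = C ((d : ℂ) * (d - 1).choose k) * X ^ k := by
  induction k with
  | zero => simp [truncBinom_zero_right]
  | succ k ih =>
    have absorb : ((k + 1 : ℕ) : ℂ[X]) * d.choose (k + 1) = d * (d - 1).choose k := by
      exact_mod_cast Nat.succ_mul_choose_eq_mul_choose_pred d k
    have pascal :
        (d : ℂ[X]) * d.choose (k + 1) = d * ((d - 1).choose k + (d - 1).choose (k + 1)) := by
      exact_mod_cast Nat.mul_choose_succ_eq_mul_choose_pred d k
    rw [truncBinom_succ, derivative_add, derivative_C_mul_X_pow]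
    simp only [map_mul, map_natCast, Nat.add_sub_cancel] at ih ⊢
    push_cast at absorb ⊢
    linear_combination ih + X ^ (k + 1) * pascal - (X + 1) * X ^ k * absorb

theorem truncBinom_wronskian_identity_general (k d : ℕ) :
    truncBinom d k * (Polynomial.C (d : ℂ) * (Polynomial.X + 1) ^ (d - 1))
      - (truncBinom d k).derivative * (Polynomial.X + 1) ^ d
      = Polynomial.C ((d : ℂ) * (Nat.choose (d - 1) k : ℂ)) * Polynomial.X ^ k
          * (Polynomial.X + 1) ^ (d - 1) := by
  cases d with
  | zero => simp [truncBinom, Finset.sum_range_succ']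
  | succ n =>
    have key := C_mul_truncBinom_sub_X_add_one_mul_derivative (n + 1) k
    rw [Nat.add_sub_cancel] at key ⊢
    linear_combination (X + 1) ^ n * key

/-- For `k < d`, the 2×2 Wronskian of `P_{k;d}` and `(x+1)^d` satisfies
`P_{k;d}(x)·d(x+1)^{d−1} − P′_{k;d}(x)·(x+1)^d = d·(d−1 choose k)·x^k·(x+1)^{d−1}`
in `ℂ[x]`. -/
theorem truncBinom_wronskian_identity (k d : ℕ) (hkd : k < d) :
    truncBinom d k * (Polynomial.C (d : ℂ) * (Polynomial.X + 1) ^ (d - 1))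
      - (truncBinom d k).derivative * (Polynomial.X + 1) ^ d
      = Polynomial.C ((d : ℂ) * (Nat.choose (d - 1) k : ℂ)) * Polynomial.X ^ k
          * (Polynomial.X + 1) ^ (d - 1) :=
  truncBinom_wronskian_identity_general k d
end

section
/- Let V be an (N+1)-dimensional ℂ-linear subspace of the space of complex polynomials of degree at most d. Let d_0 < d_1 < … < d_N be the distinct degrees of nonzero elements of V, and for each ξ ∈ ℂ let ρ_0(ξ) < ρ_1(ξ) < … < ρ_N(ξ) be the distinct root multiplicities at ξ of nonzero elements of V. Define |w(ξ;V)| := ρ_0(ξ)+⋯+ρ_N(ξ) − N(N+1)/2 for ξ ∈ ℂ, and |w(∞;V)| := (N+1)d − N(N+1)/2 − (d_0+⋯+d_N). Then |w(ξ;V)| = 0 for all but finitely many ξ ∈ ℂ, and ∑_{ξ∈ℂ} |w(ξ;V)| + |w(∞;V)| = (N+1)(d−N). -/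
/-!
The Wronskian `W` of a basis of `V` changes only by a nonzero constant factor under a change of
basis, so it may be computed in any basis. Multiplying the `j`-th column of the Wronskian matrix
by `X ^ j` turns the entry `f⁽ʲ⁾` into a polynomial whose coefficient at `X ^ k` is
`k (k - 1) ⋯ (k - j + 1)` times that of `f`. Hence in a basis with distinct degrees `d_i` the
top coefficient of `X ^ (N(N+1)/2) W` sits at `∑ d_i` and is a product of leading coefficients
times a Vandermonde determinant in the `d_i`, so `deg W = ∑ d_i - N(N+1)/2`; after a Taylor shift
the same argument with lowest coefficients gives `ord_ξ W = ∑ ρ_i(ξ) - N(N+1)/2`. Over `ℂ` the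
orders of `W` add up to its degree, and the identity follows.
-/

open Polynomial Matrix Finset

namespace Polynomial

variable {R : Type*} [CommSemiring R]

theorem coeff_prod_sum_of_natDegree_le {ι : Type*} (s : Finset ι) (f : ι → R[X]) (a : ι → ℕ)
    (h : ∀ i ∈ s, (f i).natDegree ≤ a i) :
    (∏ i ∈ s, f i).coeff (∑ i ∈ s, a i) = ∏ i ∈ s, (f i).coeff (a i) := by
  classical
  induction s using Finset.induction_on with
  | empty => simp
  | insert i s hi ih =>
    have hs : (∏ j ∈ s, f j).natDegree ≤ ∑ j ∈ s, a j :=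
      (natDegree_prod_le _ _).trans (sum_le_sum fun j hj => h j (mem_insert_of_mem hj))
    rw [prod_insert hi, sum_insert hi, prod_insert hi,
      coeff_mul_add_eq_of_natDegree_le (h i (mem_insert_self i s)) hs,
      ih fun j hj => h j (mem_insert_of_mem hj)]

theorem coeff_X_pow_mul_iterate_derivative (p : R[X]) (j k : ℕ) :
    (X ^ j * derivative^[j] p).coeff k = k.descFactorial j * p.coeff k := by
  rw [coeff_X_pow_mul']
  split_ifs with hjk
  · rw [coeff_iterate_derivative, Nat.sub_add_cancel hjk, nsmul_eq_mul]
  · rw [Nat.descFactorial_eq_zero_iff_lt.mpr (not_le.mp hjk), Nat.cast_zero, zero_mul]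

theorem iterate_derivative_taylor (r : R) (p : R[X]) (j : ℕ) :
    derivative^[j] (taylor r p) = taylor r (derivative^[j] p) := by
  have hcomm : Function.Commute derivative (taylor r) := fun q => by
    simp [taylor_apply, derivative_comp]
  exact hcomm.iterate_left j p

end Polynomial

namespace Matrix

variable {R : Type*} [CommRing R] {ι : Type*} [Fintype ι] [DecidableEq ι]

theorem natDegree_det_eq_of_natDegree_le {M : Matrix ι ι R[X]} {a : ι → ℕ}
    (h : ∀ i j, (M i j).natDegree ≤ a i)
    (hc : (of fun i j => (M i j).coeff (a i)).det ≠ 0) :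
    M.det ≠ 0 ∧ M.det.natDegree = ∑ i, a i := by
  have hterm (σ : Equiv.Perm ι) : (∏ i, M (σ i) i).natDegree ≤ ∑ i, a i := by
    rw [← Equiv.sum_comp σ a]
    exact (natDegree_prod_le _ _).trans (sum_le_sum fun i _ => h (σ i) i)
  have hcoeff : M.det.coeff (∑ i, a i) = (of fun i j => (M i j).coeff (a i)).det := by
    rw [det_apply, det_apply, finsetSum_coeff]
    refine sum_congr rfl fun σ _ => ?_
    rw [coeff_smul, ← Equiv.sum_comp σ a,
      coeff_prod_sum_of_natDegree_le _ _ _ fun i _ => h (σ i) i]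
    rfl
  have hdet : M.det ≠ 0 := fun h0 => hc (by rw [← hcoeff, h0, coeff_zero])
  refine ⟨hdet, le_antisymm ?_ (le_natDegree_of_ne_zero (hcoeff ▸ hc))⟩
  rw [det_apply]
  exact natDegree_sum_le_of_forall_le _ _ fun σ _ => (natDegree_smul_le _ _).trans (hterm σ)

theorem natTrailingDegree_det_eq_of_X_pow_dvd {M : Matrix ι ι R[X]} {a : ι → ℕ}
    (h : ∀ i j, X ^ a i ∣ M i j)
    (hc : (of fun i j => (M i j).coeff (a i)).det ≠ 0) :
    M.det ≠ 0 ∧ M.det.natTrailingDegree = ∑ i, a i := by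
  choose q hq using h
  have hdet : M.det = X ^ (∑ i, a i) * (of q).det := by
    rw [show M = of fun i j => X ^ a i * q i j from ext hq, ← prod_pow_eq_pow_sum]
    exact det_mul_column (fun i => X ^ a i) (of q)
  have hcoeff : M.det.coeff (∑ i, a i) = (of fun i j => (M i j).coeff (a i)).det := by
    have hq0 : of (fun i j => (M i j).coeff (a i)) = constantCoeff.mapMatrix (of q) := by
      ext i j
      simpa [hq i j] using coeff_X_pow_mul (q i j) (a i) 0
    rw [hq0, ← RingHom.map_det, hdet]
    simpa using coeff_X_pow_mul (of q).det (∑ i, a i) 0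
  have hne : M.det ≠ 0 := fun h0 => hc (by rw [← hcoeff, h0, coeff_zero])
  refine ⟨hne, le_antisymm (natTrailingDegree_le_of_ne_zero (hcoeff ▸ hc)) ?_⟩
  exact le_natTrailingDegree hne fun k hk => X_pow_dvd_iff.mp (hdet ▸ dvd_mul_right _ _) k hk

end Matrix

section Wronskian

variable {R : Type*} [CommRing R] {n : ℕ}

noncomputable def wronskianDet (f : Fin n → R[X]) : R[X] :=
  (of fun i j : Fin n => derivative^[j] (f i)).det

theorem det_X_pow_mul_iterate_derivative (f : Fin n → R[X]) :
    (of fun i j : Fin n => X ^ (j : ℕ) * derivative^[j] (f i)).det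
      = wronskianDet f * X ^ (∑ j : Fin n, (j : ℕ)) := by
  rw [mul_comm, ← prod_pow_eq_pow_sum]
  exact det_mul_row (fun j : Fin n => (X : R[X]) ^ (j : ℕ)) _

theorem det_coeff_X_pow_mul_iterate_derivative [IsDomain R] (f : Fin n → R[X]) (a : Fin n → ℕ) :
    (of fun i j : Fin n => (X ^ (j : ℕ) * derivative^[j] (f i)).coeff (a i)).det
      = (∏ i, (f i).coeff (a i)) * (vandermonde fun i => (a i : R)).det := by
  simp only [coeff_X_pow_mul_iterate_derivative, mul_comm _ ((f _).coeff _)]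
  refine (det_mul_column _ (of fun i j : Fin n => ((a i).descFactorial j : R))).trans ?_
  rw [det_eval_matrixOfPolynomials_eq_det_vandermonde _
    (fun j : Fin n => descPochhammer R j) (fun j => descPochhammer_natDegree R j)
    (fun j => monic_descPochhammer R j)]
  simp only [descPochhammer_eval_eq_descFactorial]

theorem det_coeff_X_pow_mul_iterate_derivative_ne_zero [IsDomain R] [CharZero R]
    {f : Fin n → R[X]} {a : Fin n → ℕ} (hf : ∀ i, (f i).coeff (a i) ≠ 0)
    (ha : Function.Injective a) :
    (of fun i j : Fin n => (X ^ (j : ℕ) * derivative^[j] (f i)).coeff (a i)).det ≠ 0 := by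
  rw [det_coeff_X_pow_mul_iterate_derivative]
  exact mul_ne_zero (prod_ne_zero_iff.mpr fun i _ => hf i)
    (det_vandermonde_ne_zero_iff.mpr (Nat.cast_injective.comp ha))

theorem natDegree_wronskianDet [IsDomain R] [CharZero R] {f : Fin n → R[X]}
    (hf : ∀ i, f i ≠ 0) (hinj : Function.Injective fun i => (f i).natDegree) :
    wronskianDet f ≠ 0 ∧
      (wronskianDet f).natDegree + ∑ j : Fin n, (j : ℕ) = ∑ i, (f i).natDegree := by
  obtain ⟨hdet, hdeg⟩ := natDegree_det_eq_of_natDegree_le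
    (M := of fun i j : Fin n => X ^ (j : ℕ) * derivative^[j] (f i))
    (fun i j => natDegree_le_iff_coeff_eq_zero.mpr fun k hk => by
      rw [of_apply, coeff_X_pow_mul_iterate_derivative, coeff_eq_zero_of_natDegree_lt hk,
        mul_zero])
    (det_coeff_X_pow_mul_iterate_derivative_ne_zero (fun i => leadingCoeff_ne_zero.mpr (hf i))
      hinj)
  rw [det_X_pow_mul_iterate_derivative] at hdet hdeg
  have hW := left_ne_zero_of_mul hdet
  rw [natDegree_mul_X_pow _ hW] at hdeg
  exact ⟨hW, hdeg⟩

theorem natTrailingDegree_wronskianDet [IsDomain R] [CharZero R] {f : Fin n → R[X]}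
    (hf : ∀ i, f i ≠ 0) (hinj : Function.Injective fun i => (f i).natTrailingDegree) :
    wronskianDet f ≠ 0 ∧
      (wronskianDet f).natTrailingDegree + ∑ j : Fin n, (j : ℕ)
        = ∑ i, (f i).natTrailingDegree := by
  obtain ⟨hdet, hdeg⟩ := natTrailingDegree_det_eq_of_X_pow_dvd
    (M := of fun i j : Fin n => X ^ (j : ℕ) * derivative^[j] (f i))
    (fun i j => X_pow_dvd_iff.mpr fun k hk => by
      rw [of_apply, coeff_X_pow_mul_iterate_derivative,
        coeff_eq_zero_of_lt_natTrailingDegree hk, mul_zero])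
    (det_coeff_X_pow_mul_iterate_derivative_ne_zero
      (fun i => trailingCoeff_nonzero_iff_nonzero.mpr (hf i)) hinj)
  rw [det_X_pow_mul_iterate_derivative] at hdet hdeg
  have hW := left_ne_zero_of_mul hdet
  rw [natTrailingDegree_mul_X_pow hW] at hdeg
  exact ⟨hW, hdeg⟩

theorem wronskianDet_taylor (r : R) (f : Fin n → R[X]) :
    wronskianDet (fun i => taylor r (f i)) = taylor r (wronskianDet f) := by
  change _ = taylorAlgHom r _
  rw [wronskianDet, wronskianDet, AlgHom.map_det]
  congr 1
  ext i j
  simp [iterate_derivative_taylor]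

theorem rootMultiplicity_wronskianDet [IsDomain R] [CharZero R] (r : R) {f : Fin n → R[X]}
    (hf : ∀ i, f i ≠ 0) (hinj : Function.Injective fun i => (f i).rootMultiplicity r) :
    wronskianDet f ≠ 0 ∧
      (wronskianDet f).rootMultiplicity r + ∑ j : Fin n, (j : ℕ)
        = ∑ i, (f i).rootMultiplicity r := by
  simp only [rootMultiplicity_eq_natTrailingDegree, ← taylor_apply] at hinj ⊢
  obtain ⟨hW, hdeg⟩ :=
    natTrailingDegree_wronskianDet (fun i => (taylor_eq_zero r (f i)).not.mpr (hf i)) hinj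
  rw [wronskianDet_taylor] at hW hdeg
  exact ⟨(taylor_eq_zero r _).not.mp hW, hdeg⟩

theorem wronskianDet_sum_smul (c : Matrix (Fin n) (Fin n) R) (g : Fin n → R[X]) :
    wronskianDet (fun i => ∑ k, c i k • g k) = C c.det * wronskianDet g := by
  rw [wronskianDet, wronskianDet, RingHom.map_det, ← det_mul]
  congr 1
  ext i j
  simp [mul_apply, iterate_derivative_sum, smul_eq_C_mul]

section Subspace

variable {K : Type*} [Field K] {V : Submodule K K[X]} (b : Module.Basis (Fin n) K V)

theorem exists_wronskianDet_eq_C_mul {h : Fin n → K[X]} (hV : ∀ i, h i ∈ V) :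
    ∃ e : K, wronskianDet h = C e * wronskianDet fun i => (b i : K[X]) := by
  refine ⟨(of fun i k => b.repr ⟨h i, hV i⟩ k).det, ?_⟩
  rw [← wronskianDet_sum_smul]
  congr 1
  ext1 i
  simpa only [Submodule.coe_sum, Submodule.coe_smul, of_apply] using
    congrArg Subtype.val (b.sum_repr ⟨h i, hV i⟩).symm

variable [CharZero K]

theorem natDegree_wronskianDet_basis {d : Fin n → ℕ} (hd : Function.Injective d)
    (hset : {k : ℕ | ∃ g ∈ V, g ≠ 0 ∧ g.natDegree = k} = Set.range d) :
    wronskianDet (fun i => (b i : K[X])) ≠ 0 ∧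
      (wronskianDet fun i => (b i : K[X])).natDegree + ∑ j : Fin n, (j : ℕ) = ∑ i, d i := by
  choose g hgV hg0 hgd using fun i => (Set.ext_iff.mp hset (d i)).mpr ⟨i, rfl⟩
  obtain ⟨e, he⟩ := exists_wronskianDet_eq_C_mul b hgV
  obtain ⟨hW, hdeg⟩ := natDegree_wronskianDet hg0 (by simpa only [hgd] using hd)
  rw [he] at hW hdeg
  obtain ⟨he0, hW⟩ := mul_ne_zero_iff.mp hW
  rw [natDegree_C_mul (C_ne_zero.mp he0)] at hdeg
  simpa only [hgd] using And.intro hW hdeg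

theorem rootMultiplicity_wronskianDet_basis (r : K) {ρ : Fin n → ℕ} (hρ : Function.Injective ρ)
    (hset : {k : ℕ | ∃ g ∈ V, g ≠ 0 ∧ g.rootMultiplicity r = k} = Set.range ρ) :
    (wronskianDet fun i => (b i : K[X])).rootMultiplicity r + ∑ j : Fin n, (j : ℕ)
      = ∑ i, ρ i := by
  choose h hhV hh0 hhρ using fun i => (Set.ext_iff.mp hset (ρ i)).mpr ⟨i, rfl⟩
  obtain ⟨e, he⟩ := exists_wronskianDet_eq_C_mul b hhV
  obtain ⟨hW, hmult⟩ := rootMultiplicity_wronskianDet r hh0 (by simpa only [hhρ] using hρ)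
  rw [he] at hW hmult
  rwa [rootMultiplicity_mul hW, rootMultiplicity_C, zero_add, sum_congr rfl fun i _ => hhρ i]
    at hmult

end Subspace

end Wronskian

theorem Polynomial.finite_setOf_rootMultiplicity_ne_zero {R : Type*} [CommRing R] [IsDomain R]
    {p : R[X]} (hp : p ≠ 0) : {r | p.rootMultiplicity r ≠ 0}.Finite :=
  p.roots.finite_toSet.subset fun r hr => by
    simpa [hp] using rootMultiplicity_pos'.mp (Nat.pos_of_ne_zero hr)

theorem Polynomial.finsum_rootMultiplicity_eq_natDegree {K : Type*} [Field K] [IsAlgClosed K]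
    {p : K[X]} (hp : p ≠ 0) : ∑ᶠ r, p.rootMultiplicity r = p.natDegree := by
  classical
  rw [finsum_eq_sum_of_support_subset _ (s := p.roots.toFinset) fun r hr => by
      simpa [hp] using rootMultiplicity_pos'.mp (Nat.pos_of_ne_zero hr),
    ← IsAlgClosed.card_roots_eq_natDegree, ← Multiset.toFinset_sum_count_eq]
  exact sum_congr rfl fun r _ => (count_roots p).symm

theorem Fin.sum_val_mul_two (n : ℕ) : (∑ j : Fin (n + 1), (j : ℕ)) * 2 = n * (n + 1) := by
  rw [Fin.sum_univ_eq_sum_range (fun j => j), sum_range_id_mul_two, Nat.add_sub_cancel, mul_comm]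

theorem sum_local_exponents_general (N d : ℕ) (V : Submodule ℂ (Polynomial ℂ))
    (hrank : Module.finrank ℂ V = N + 1)
    (dseq : Fin (N + 1) → ℕ) (hdmono : StrictMono dseq)
    (hdset : {k : ℕ | ∃ g ∈ V, g ≠ 0 ∧ g.natDegree = k} = Set.range dseq)
    (ρ : ℂ → Fin (N + 1) → ℕ) (hρmono : ∀ ξ, StrictMono (ρ ξ))
    (hρset : ∀ ξ : ℂ, {k : ℕ | ∃ g ∈ V, g ≠ 0 ∧ Polynomial.rootMultiplicity ξ g = k}
      = Set.range (ρ ξ)) :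
    {ξ : ℂ | (∑ i, (ρ ξ i : ℤ)) - (N * (N + 1) / 2 : ℕ) ≠ 0}.Finite ∧
    (∑ᶠ ξ : ℂ, ((∑ i, (ρ ξ i : ℤ)) - (N * (N + 1) / 2 : ℕ)))
      + ((N + 1 : ℤ) * d - (N * (N + 1) / 2 : ℕ) - ∑ i, (dseq i : ℤ))
      = (N + 1 : ℤ) * ((d : ℤ) - N) := by
  have hT := Fin.sum_val_mul_two N
  rw [Nat.div_eq_of_eq_mul_left two_pos hT.symm]
  have : Module.Finite ℂ V := Module.finite_of_finrank_pos (hrank ▸ N.succ_pos)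
  set b := Module.finBasisOfFinrankEq ℂ V hrank
  set W := wronskianDet fun i => (b i : ℂ[X])
  obtain ⟨hW, hWdeg⟩ := natDegree_wronskianDet_basis b hdmono.injective hdset
  have hWmult (ξ : ℂ) : (∑ i, (ρ ξ i : ℤ)) - (∑ j : Fin (N + 1), (j : ℕ) : ℕ)
      = (W.rootMultiplicity ξ : ℤ) := by
    rw [← Nat.cast_sum, ← rootMultiplicity_wronskianDet_basis b ξ (hρmono ξ).injective (hρset ξ)]
    push_cast
    ring
  simp only [hWmult, ne_eq, Nat.cast_eq_zero]
  refine ⟨finite_setOf_rootMultiplicity_ne_zero hW, ?_⟩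
  have hsum : ∑ᶠ ξ, (W.rootMultiplicity ξ : ℤ) = W.natDegree := by
    rw [← finsum_rootMultiplicity_eq_natDegree hW]
    exact ((Nat.castAddMonoidHom ℤ).map_finsum (finite_setOf_rootMultiplicity_ne_zero hW)).symm
  rw [hsum, ← Nat.cast_sum, ← hWdeg]
  zify at hT
  push_cast
  linear_combination -hT

/-- Let `V` be an `(N+1)`-dimensional subspace of the space of complex polynomials of
degree at most `d`, let `d_0 < … < d_N` be the distinct degrees of nonzero elements of
`V`, and for each `ξ ∈ ℂ` let `ρ_0(ξ) < … < ρ_N(ξ)` be the distinct root multiplicities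
at `ξ` of nonzero elements of `V`.  With
`|w(ξ;V)| = ρ_0(ξ)+⋯+ρ_N(ξ) − N(N+1)/2` and
`|w(∞;V)| = (N+1)d − N(N+1)/2 − (d_0+⋯+d_N)`, one has `|w(ξ;V)| = 0` for all but
finitely many `ξ` and `∑_{ξ∈ℂ} |w(ξ;V)| + |w(∞;V)| = (N+1)(d−N)`. -/
theorem sum_local_exponents (N d : ℕ) (V : Submodule ℂ (Polynomial ℂ))
    (hdeg : V ≤ Polynomial.degreeLE ℂ (d : WithBot ℕ))
    (hrank : Module.finrank ℂ V = N + 1)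
    (dseq : Fin (N + 1) → ℕ) (hdmono : StrictMono dseq)
    (hdset : {k : ℕ | ∃ g ∈ V, g ≠ 0 ∧ g.natDegree = k} = Set.range dseq)
    (ρ : ℂ → Fin (N + 1) → ℕ) (hρmono : ∀ ξ, StrictMono (ρ ξ))
    (hρset : ∀ ξ : ℂ, {k : ℕ | ∃ g ∈ V, g ≠ 0 ∧ Polynomial.rootMultiplicity ξ g = k}
      = Set.range (ρ ξ)) :
    {ξ : ℂ | (∑ i, (ρ ξ i : ℤ)) - (N * (N + 1) / 2 : ℕ) ≠ 0}.Finite ∧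
    (∑ᶠ ξ : ℂ, ((∑ i, (ρ ξ i : ℤ)) - (N * (N + 1) / 2 : ℕ)))
      + ((N + 1 : ℤ) * d - (N * (N + 1) / 2 : ℕ) - ∑ i, (dseq i : ℤ))
      = (N + 1 : ℤ) * ((d : ℤ) - N) :=
  sum_local_exponents_general N d V hrank dseq hdmono hdset ρ hρmono hρset
end
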